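/- Let μ be a positive finite measure on the unit circle satisfying μ([θ-t,θ+t]) ≤ t·g(t) for all θ and t ∈ (0,π], where g : (0,π] → (0,∞) is continuous and non-increasing. Let S(z) = exp(-∫_T (e^{it}+z)/(e^{it}-z) dμ(t)). Then for every r ∈ [0,1) and θ: -log|S(re^{iθ})| ≤ 3π g(π(1-r)). -/

import Mathlib

open MeasureTheory Set Real Complex

instance : Fact (0 < 2 * Real.pi) := ⟨by positivity⟩

/-- The singular inner function of a measure on the circle. -/
noncomputable def singInnerAngle (μ : Measure (AddCircle (2 * Real.pi))) (z : ℂ) : ℂ :=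
  Complex.exp (-∫ t, ((AddCircle.toCircle t : ℂ) + z) /
      ((AddCircle.toCircle t : ℂ) - z) ∂μ)

/-!
`-log |S(re^{iθ})|` is the Poisson integral `∫ P_r(dist(t, θ)) dμ(t)`. Since `P_r` decreases on
`[0, π]`, a layer-cake (Fubini) argument rewrites it as
`P_r(π) μ(𝕋) + ∫₀^π (-∂ₛP_r)(u) μ(B(θ, u)) du`. The growth hypothesis gives
`μ(B(θ, u)) ≤ max(u, ε) g(ε)` for every `ε ∈ (0, π]`, and for this majorant the same
formula evaluates (integrating by parts) to `(ε P_r(0) + ∫_ε^π P_r) g(ε)`, which is at most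
`(ε P_r(0) + π) g(ε)` because `∫₀^π P_r = π`. Taking `ε = π(1 - r)` gives
`ε P_r(0) = π(1 + r) ≤ 2π`.
-/

open scoped ENNReal

noncomputable def poissonKernelReal (r s : ℝ) : ℝ :=
  (1 - r ^ 2) / (1 + r ^ 2 - 2 * r * Real.cos s)

noncomputable def negDerivPoissonKernelReal (r s : ℝ) : ℝ :=
  2 * r * (1 - r ^ 2) * Real.sin s / (1 + r ^ 2 - 2 * r * Real.cos s) ^ 2

lemma mul_cos_le_abs (r s : ℝ) : r * Real.cos s ≤ |r| :=
  (le_abs_self _).trans <| by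
    rw [abs_mul]; exact mul_le_of_le_one_right (abs_nonneg r) (Real.abs_cos_le_one s)

section PoissonKernel

variable {r : ℝ}

lemma one_sub_mul_cos_pos (hr : |r| < 1) (s : ℝ) : 0 < 1 - r * Real.cos s := by
  linarith [mul_cos_le_abs r s]

lemma one_add_sq_sub_two_mul_cos_pos (hr : |r| < 1) (s : ℝ) :
    0 < 1 + r ^ 2 - 2 * r * Real.cos s := by
  nlinarith [mul_cos_le_abs r s, sq_abs r, abs_nonneg r]

lemma poissonKernelReal_nonneg (hr : |r| < 1) (s : ℝ) : 0 ≤ poissonKernelReal r s := by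
  have : 0 ≤ 1 - r ^ 2 := by nlinarith [sq_abs r, abs_nonneg r]
  exact div_nonneg this (one_add_sq_sub_two_mul_cos_pos hr s).le

lemma poissonKernelReal_zero (hr : r < 1) : poissonKernelReal r 0 = (1 + r) / (1 - r) := by
  rw [poissonKernelReal, Real.cos_zero, div_eq_div_iff (by nlinarith) (by linarith)]
  ring

lemma negDerivPoissonKernelReal_nonneg (hr0 : 0 ≤ r) (hr1 : r < 1) {s : ℝ}
    (hs : s ∈ Icc 0 π) : 0 ≤ negDerivPoissonKernelReal r s := by
  have := sin_nonneg_of_nonneg_of_le_pi hs.1 hs.2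
  have : 0 ≤ 1 - r ^ 2 := by nlinarith
  unfold negDerivPoissonKernelReal; positivity

lemma continuous_negDerivPoissonKernelReal (hr : |r| < 1) :
    Continuous (negDerivPoissonKernelReal r) :=
  Continuous.div (by fun_prop) (by fun_prop)
    fun s => pow_ne_zero 2 (one_add_sq_sub_two_mul_cos_pos hr s).ne'

lemma continuous_poissonKernelReal (hr : |r| < 1) : Continuous (poissonKernelReal r) :=
  continuous_const.div (by fun_prop) fun s => (one_add_sq_sub_two_mul_cos_pos hr s).ne'

lemma hasDerivAt_poissonKernelReal (hr : |r| < 1) (s : ℝ) :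
    HasDerivAt (poissonKernelReal r) (-negDerivPoissonKernelReal r s) s := by
  have hD := one_add_sq_sub_two_mul_cos_pos hr s
  have hden : HasDerivAt (fun s => 1 + r ^ 2 - 2 * r * Real.cos s) (2 * r * Real.sin s) s := by
    simpa using ((Real.hasDerivAt_cos s).const_mul (2 * r)).const_sub (1 + r ^ 2)
  refine ((hasDerivAt_const s (1 - r ^ 2)).div hden hD.ne').congr_deriv ?_
  simp only [negDerivPoissonKernelReal]
  ring

lemma hasDerivAt_poissonKernelReal_primitive (hr : |r| < 1) (s : ℝ) :
    HasDerivAt (fun s => s + 2 * Real.arctan (r * Real.sin s / (1 - r * Real.cos s)))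
      (poissonKernelReal r s) s := by
  have hd := one_sub_mul_cos_pos hr s
  have hD := one_add_sq_sub_two_mul_cos_pos hr s
  have hq : HasDerivAt (fun s => r * Real.sin s / (1 - r * Real.cos s))
      ((r * Real.cos s * (1 - r * Real.cos s) - r * Real.sin s * (r * Real.sin s))
        / (1 - r * Real.cos s) ^ 2) s := by
    have hm : HasDerivAt (fun s => 1 - r * Real.cos s) (r * Real.sin s) s := by
      simpa using ((Real.hasDerivAt_cos s).const_mul r).const_sub 1
    exact ((Real.hasDerivAt_sin s).const_mul r).div hm hd.ne'
  refine ((hasDerivAt_id' s).add (hq.arctan.const_mul 2)).congr_deriv ?_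
  have hsq := Real.sin_sq_add_cos_sq s
  have h1 : 1 + (r * Real.sin s / (1 - r * Real.cos s)) ^ 2
      = (1 + r ^ 2 - 2 * r * Real.cos s) / (1 - r * Real.cos s) ^ 2 := by
    field_simp
    linear_combination r ^ 2 * hsq
  rw [poissonKernelReal, h1]
  field_simp
  linear_combination (-2 * r ^ 2) * hsq

lemma integral_poissonKernelReal_zero_pi (hr : |r| < 1) :
    ∫ s in (0)..π, poissonKernelReal r s = π := by
  rw [intervalIntegral.integral_eq_sub_of_hasDerivAt
    (fun s _ => hasDerivAt_poissonKernelReal_primitive hr s)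
    ((continuous_poissonKernelReal hr).intervalIntegrable _ _)]
  simp

lemma integral_poissonKernelReal_le_pi (hr : |r| < 1) {ε : ℝ} (hε : ε ∈ Icc 0 π) :
    ∫ s in ε..π, poissonKernelReal r s ≤ π := by
  have hint : ∀ a b, IntervalIntegrable (poissonKernelReal r) volume a b :=
    fun a b => (continuous_poissonKernelReal hr).intervalIntegrable a b
  have h0ε : 0 ≤ ∫ s in (0)..ε, poissonKernelReal r s :=
    intervalIntegral.integral_nonneg hε.1 fun s _ => poissonKernelReal_nonneg hr s
  have hsplit := intervalIntegral.integral_add_adjacent_intervals (hint 0 ε) (hint ε π)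
  rw [integral_poissonKernelReal_zero_pi hr] at hsplit
  linarith

lemma integral_negDerivPoissonKernelReal (hr : |r| < 1) (a b : ℝ) :
    ∫ u in a..b, negDerivPoissonKernelReal r u
      = poissonKernelReal r a - poissonKernelReal r b := by
  rw [intervalIntegral.integral_eq_sub_of_hasDerivAt (f := fun u => -poissonKernelReal r u)
    (fun u _ => (hasDerivAt_poissonKernelReal hr u).neg.congr_deriv (neg_neg _))
    ((continuous_negDerivPoissonKernelReal hr).intervalIntegrable a b)]
  ring

lemma ofReal_poissonKernelReal_eq (hr0 : 0 ≤ r) (hr1 : r < 1) {d : ℝ} (hd : d ∈ Icc 0 π) :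
    ENNReal.ofReal (poissonKernelReal r d) = ENNReal.ofReal (poissonKernelReal r π)
      + ∫⁻ u in Ioc d π, ENNReal.ofReal (negDerivPoissonKernelReal r u) := by
  have hr : |r| < 1 := abs_lt.mpr ⟨by linarith, hr1⟩
  have hnonneg : ∀ u ∈ Icc d π, 0 ≤ negDerivPoissonKernelReal r u :=
    fun u hu => negDerivPoissonKernelReal_nonneg hr0 hr1 ⟨hd.1.trans hu.1, hu.2⟩
  have hdecr : 0 ≤ poissonKernelReal r d - poissonKernelReal r π :=
    integral_negDerivPoissonKernelReal hr d π ▸ intervalIntegral.integral_nonneg hd.2 hnonneg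
  rw [← ofReal_integral_eq_lintegral_ofReal
      (continuous_negDerivPoissonKernelReal hr).integrableOn_Ioc
      ((ae_restrict_mem measurableSet_Ioc).mono fun u hu => hnonneg u (Ioc_subset_Icc_self hu)),
    ← intervalIntegral.integral_of_le hd.2, integral_negDerivPoissonKernelReal hr,
    ← ENNReal.ofReal_add (poissonKernelReal_nonneg hr π) hdecr]
  ring_nf

lemma integral_negDerivPoissonKernelReal_mul_max (hr : |r| < 1) {ε : ℝ} (hε : ε ∈ Icc 0 π) :
    π * poissonKernelReal r π + ∫ u in (0)..π, negDerivPoissonKernelReal r u * max u ε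
      = ε * poissonKernelReal r 0 + ∫ u in ε..π, poissonKernelReal r u := by
  have hcont : Continuous fun u => negDerivPoissonKernelReal r u * max u ε := by
    have := continuous_negDerivPoissonKernelReal hr; fun_prop
  have hlow : ∫ u in (0)..ε, negDerivPoissonKernelReal r u * max u ε
      = ε * (poissonKernelReal r 0 - poissonKernelReal r ε) := by
    rw [intervalIntegral.integral_congr (g := fun u => ε * negDerivPoissonKernelReal r u)
      fun u hu => by
        rw [uIcc_of_le hε.1] at hu
        simp only [max_eq_right hu.2, mul_comm],
      intervalIntegral.integral_const_mul, integral_negDerivPoissonKernelReal hr]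
  have hhigh : ∫ u in ε..π, negDerivPoissonKernelReal r u * max u ε
      = ε * poissonKernelReal r ε - π * poissonKernelReal r π
        + ∫ u in ε..π, poissonKernelReal r u := by
    rw [intervalIntegral.integral_congr (g := fun u => u * negDerivPoissonKernelReal r u)
      fun u hu => by
        rw [uIcc_of_le hε.2] at hu
        simp only [max_eq_left hu.1, mul_comm]]
    have := intervalIntegral.integral_mul_deriv_eq_deriv_mul (a := ε) (b := π)
      (u := fun u => u) (v := fun u => -poissonKernelReal r u)
      (fun u _ => hasDerivAt_id' u)
      (fun u _ => (hasDerivAt_poissonKernelReal hr u).neg.congr_deriv (neg_neg _))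
      intervalIntegrable_const ((continuous_negDerivPoissonKernelReal hr).intervalIntegrable _ _)
    simp only [one_mul, intervalIntegral.integral_neg] at this
    rw [this]
    ring
  rw [← intervalIntegral.integral_add_adjacent_intervals (hcont.intervalIntegrable 0 ε)
    (hcont.intervalIntegrable ε π), hlow, hhigh]
  ring

end PoissonKernel

lemma AddCircle.dist_le_pi (t θ : AddCircle (2 * π)) : dist t θ ≤ π := by
  simpa [dist_eq_norm, abs_of_pos two_pi_pos] using
    AddCircle.norm_le_half_period (2 * π) (x := t - θ) two_pi_pos.ne'

lemma AddCircle.cos_dist_coe (a b : ℝ) :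
    Real.cos (dist (a : AddCircle (2 * π)) b) = Real.cos (a - b) := by
  rw [dist_eq_norm, ← AddCircle.coe_sub, AddCircle.norm_eq, Real.cos_abs,
    Real.cos_sub_int_mul_two_pi]

lemma AddCircle.coe_toCircle_coe (a : ℝ) :
    (AddCircle.toCircle (a : AddCircle (2 * π)) : ℂ) = Complex.exp (a * I) := by
  rw [AddCircle.toCircle_apply_mk, div_self two_pi_pos.ne', one_mul, Circle.coe_exp]

lemma norm_exp_mul_I_sub_mul_exp_mul_I_sq (r a b : ℝ) :
    ‖Complex.exp (a * I) - r * Complex.exp (b * I)‖ ^ 2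
      = 1 + r ^ 2 - 2 * r * Real.cos (a - b) := by
  rw [Complex.sq_norm, normSq_apply]
  simp only [sub_re, sub_im, re_ofReal_mul, im_ofReal_mul, exp_ofReal_mul_I_re,
    exp_ofReal_mul_I_im, Real.cos_sub]
  linear_combination Real.sin_sq_add_cos_sq a + r ^ 2 * Real.sin_sq_add_cos_sq b

lemma re_exp_mul_I_add_div_sub {r : ℝ} (hr0 : 0 ≤ r) (a b : ℝ) :
    ((Complex.exp (a * I) + r * Complex.exp (b * I)) /
      (Complex.exp (a * I) - r * Complex.exp (b * I))).re = poissonKernelReal r (a - b) := by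
  have h := congrFun
    (poissonKernel_eq_re_herglotzRieszKernel (c := 0) (w := r * Complex.exp (b * I)))
    (Complex.exp (a * I))
  simp only [poissonKernel, herglotzRieszKernel, Function.comp_apply, sub_zero] at h
  rw [← h, norm_exp_mul_I_sub_mul_exp_mul_I_sq, norm_mul, norm_real, norm_exp_ofReal_mul_I,
    norm_exp_ofReal_mul_I, Real.norm_of_nonneg hr0, mul_one, one_pow, poissonKernelReal]

section MetricMeasureSpace

variable {X : Type*} [PseudoMetricSpace X] [MeasurableSpace X]

lemma measure_closedBall_le_max_mul (μ : Measure X) {x₀ : X} {g : ℝ → ℝ} {a ε u : ℝ}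
    (hanti : AntitoneOn g (Ioc 0 a))
    (hball : ∀ t ∈ Ioc 0 a, μ (Metric.closedBall x₀ t) ≤ ENNReal.ofReal (t * g t))
    (hε : ε ∈ Ioc 0 a) (hu : u ∈ Ioc 0 a) :
    μ (Metric.closedBall x₀ u) ≤ ENNReal.ofReal (max u ε * g ε) := by
  rcases le_total u ε with huε | hεu
  · rw [max_eq_right huε]
    exact (measure_mono (Metric.closedBall_subset_closedBall huε)).trans (hball ε hε)
  · rw [max_eq_left hεu]
    refine (hball u hu).trans (ENNReal.ofReal_le_ofReal ?_)
    exact mul_le_mul_of_nonneg_left (hanti hε hu hεu) hu.1.le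

variable [OpensMeasurableSpace X] (μ : Measure X) [SFinite μ]

theorem lintegral_lintegral_Ioc_dist (x₀ : X) {φ : ℝ → ℝ≥0∞} (hφ : Measurable φ)
    (a : ℝ) :
    ∫⁻ x, (∫⁻ u in Ioc (dist x x₀) a, φ u) ∂μ
      = ∫⁻ u in Ioc 0 a, φ u * μ (Metric.ball x₀ u) := by
  have hIoc : ∀ x, ∫⁻ u in Ioc (dist x x₀) a, φ u
      = ∫⁻ u in Ioc 0 a, (Ioi (dist x x₀)).indicator φ u := by
    intro x
    rw [lintegral_indicator measurableSet_Ioi, Measure.restrict_restrict measurableSet_Ioi,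
      inter_comm, Ioc_inter_Ioi, max_eq_right dist_nonneg]
  have hmeas : Measurable (Function.uncurry fun x u => (Ioi (dist x x₀)).indicator φ u) :=
    (hφ.comp measurable_snd).indicator <| measurableSet_lt
      ((continuous_id.dist continuous_const).measurable.comp measurable_fst) measurable_snd
  simp_rw [hIoc]
  rw [lintegral_lintegral_swap hmeas.aemeasurable]
  refine lintegral_congr fun u => ?_
  rw [← lintegral_indicator_const Metric.isOpen_ball.measurableSet]
  congr 1 with x

theorem lintegral_poissonKernelReal_dist_eq {x₀ : X} (hx₀ : ∀ x, dist x x₀ ≤ π)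
    {r : ℝ} (hr0 : 0 ≤ r) (hr1 : r < 1) :
    ∫⁻ x, ENNReal.ofReal (poissonKernelReal r (dist x x₀)) ∂μ
      = ENNReal.ofReal (poissonKernelReal r π) * μ univ + ∫⁻ u in Ioc 0 π,
          ENNReal.ofReal (negDerivPoissonKernelReal r u) * μ (Metric.ball x₀ u) := by
  have hr : |r| < 1 := abs_lt.mpr ⟨by linarith, hr1⟩
  simp_rw [ofReal_poissonKernelReal_eq hr0 hr1 ⟨dist_nonneg, hx₀ _⟩]
  rw [lintegral_add_left measurable_const, lintegral_const, lintegral_lintegral_Ioc_dist μ x₀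
    (continuous_negDerivPoissonKernelReal hr).measurable.ennreal_ofReal]

theorem lintegral_poissonKernelReal_dist_le {x₀ : X} (hx₀ : ∀ x, dist x x₀ ≤ π)
    {g : ℝ → ℝ} (hanti : AntitoneOn g (Ioc 0 π))
    (hball : ∀ t ∈ Ioc 0 π, μ (Metric.closedBall x₀ t) ≤ ENNReal.ofReal (t * g t))
    {r : ℝ} (hr0 : 0 ≤ r) (hr1 : r < 1) {ε : ℝ} (hε : ε ∈ Ioc 0 π) (hgε : 0 ≤ g ε) :
    ∫⁻ x, ENNReal.ofReal (poissonKernelReal r (dist x x₀)) ∂μ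
      ≤ ENNReal.ofReal ((ε * poissonKernelReal r 0 + π) * g ε) := by
  have hr : |r| < 1 := abs_lt.mpr ⟨by linarith, hr1⟩
  have huniv : μ univ ≤ ENNReal.ofReal (π * g ε) := by
    have := measure_closedBall_le_max_mul μ hanti hball hε ⟨pi_pos, le_rfl⟩
    rwa [max_eq_left hε.2, eq_univ_of_forall (s := Metric.closedBall x₀ π) hx₀] at this
  have hball' : ∀ u ∈ Ioc 0 π,
      ENNReal.ofReal (negDerivPoissonKernelReal r u) * μ (Metric.ball x₀ u)
        ≤ ENNReal.ofReal (negDerivPoissonKernelReal r u * max u ε * g ε) := by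
    intro u hu
    rw [mul_assoc, ENNReal.ofReal_mul
      (negDerivPoissonKernelReal_nonneg hr0 hr1 (Ioc_subset_Icc_self hu))]
    gcongr
    exact (measure_mono Metric.ball_subset_closedBall).trans
      (measure_closedBall_le_max_mul μ hanti hball hε hu)
  have hcont : Continuous fun u => negDerivPoissonKernelReal r u * max u ε * g ε := by
    have := continuous_negDerivPoissonKernelReal hr; fun_prop
  have hnonneg : 0 ≤ᵐ[volume.restrict (Ioc 0 π)]
      fun u => negDerivPoissonKernelReal r u * max u ε * g ε := by
    filter_upwards [ae_restrict_mem measurableSet_Ioc] with u hu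
    have := negDerivPoissonKernelReal_nonneg hr0 hr1 (Ioc_subset_Icc_self hu)
    have : 0 ≤ max u ε := le_max_of_le_right hε.1.le
    positivity
  have hPπ := poissonKernelReal_nonneg hr π
  calc ∫⁻ x, ENNReal.ofReal (poissonKernelReal r (dist x x₀)) ∂μ
      ≤ ENNReal.ofReal (poissonKernelReal r π) * ENNReal.ofReal (π * g ε)
          + ∫⁻ u in Ioc 0 π,
            ENNReal.ofReal (negDerivPoissonKernelReal r u * max u ε * g ε) := by
        rw [lintegral_poissonKernelReal_dist_eq μ hx₀ hr0 hr1]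
        exact add_le_add (by gcongr) (setLIntegral_mono hcont.measurable.ennreal_ofReal hball')
    _ = ENNReal.ofReal (poissonKernelReal r π * (π * g ε))
          + ENNReal.ofReal
            (∫ u in (0)..π, negDerivPoissonKernelReal r u * max u ε * g ε) := by
        rw [ENNReal.ofReal_mul hPπ, intervalIntegral.integral_of_le pi_pos.le,
          ofReal_integral_eq_lintegral_ofReal hcont.integrableOn_Ioc hnonneg]
    _ = ENNReal.ofReal
          ((ε * poissonKernelReal r 0 + ∫ u in ε..π, poissonKernelReal r u) * g ε) := by
        rw [← ENNReal.ofReal_add (by positivity) (by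
          rw [intervalIntegral.integral_of_le pi_pos.le]; exact integral_nonneg_of_ae hnonneg),
          intervalIntegral.integral_mul_const,
          ← integral_negDerivPoissonKernelReal_mul_max hr (Ioc_subset_Icc_self hε)]
        ring_nf
    _ ≤ ENNReal.ofReal ((ε * poissonKernelReal r 0 + π) * g ε) := by
        gcongr
        exact integral_poissonKernelReal_le_pi hr (Ioc_subset_Icc_self hε)

end MetricMeasureSpace

lemma neg_log_norm_singInnerAngle (μ : Measure (AddCircle (2 * π))) [IsFiniteMeasure μ]
    {r : ℝ} (hr0 : 0 ≤ r) (hr1 : r < 1) (θ : ℝ) :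
    -Real.log ‖singInnerAngle μ (r * Complex.exp (θ * I))‖
      = ∫ t, poissonKernelReal r (dist t (θ : AddCircle (2 * π))) ∂μ := by
  set z : ℂ := r * Complex.exp (θ * I)
  have hne : ∀ t : AddCircle (2 * π), (AddCircle.toCircle t : ℂ) - z ≠ 0 := by
    intro t h
    have := congrArg norm (sub_eq_zero.mp h)
    rw [Circle.norm_coe, norm_mul, norm_real, norm_exp_ofReal_mul_I, mul_one,
      Real.norm_of_nonneg hr0] at this
    linarith
  have hcont : Continuous fun t : AddCircle (2 * π) =>
      ((AddCircle.toCircle t : ℂ) + z) / ((AddCircle.toCircle t : ℂ) - z) := by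
    have : Continuous fun t : AddCircle (2 * π) => (AddCircle.toCircle t : ℂ) :=
      continuous_subtype_val.comp AddCircle.continuous_toCircle
    exact (this.add continuous_const).div (this.sub continuous_const) hne
  rw [singInnerAngle, norm_exp, Real.log_exp, neg_re, neg_neg, ← RCLike.re_to_complex,
    ← integral_re (hcont.integrable_of_hasCompactSupport (HasCompactSupport.of_compactSpace _))]
  refine integral_congr_ae (Filter.Eventually.of_forall fun t => ?_)
  induction t using QuotientAddGroup.induction_on with
  | H a =>
    simp only [RCLike.re_to_complex, AddCircle.coe_toCircle_coe, z,
      re_exp_mul_I_add_div_sub hr0, poissonKernelReal, AddCircle.cos_dist_coe]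

theorem stmt16_general (μ : Measure (AddCircle (2 * Real.pi))) [IsFiniteMeasure μ]
    (g : ℝ → ℝ)
    (hgpos : ∀ t ∈ Set.Ioc (0 : ℝ) Real.pi, 0 < g t)
    (hganti : AntitoneOn g (Set.Ioc (0 : ℝ) Real.pi))
    (hball : ∀ (θ : AddCircle (2 * Real.pi)), ∀ t ∈ Set.Ioc (0 : ℝ) Real.pi,
      μ (Metric.closedBall θ t) ≤ ENNReal.ofReal (t * g t)) :
    ∀ r ∈ Set.Ico (0 : ℝ) 1, ∀ θ : ℝ,
      -Real.log (‖
          (singInnerAngle μ ((r : ℂ) * Complex.exp (θ * Complex.I)))‖) ≤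
        3 * Real.pi * g (Real.pi * (1 - r)) := by
  rintro r ⟨hr0, hr1⟩ θ
  have hε : π * (1 - r) ∈ Ioc 0 π := ⟨by nlinarith [pi_pos], by nlinarith [pi_pos]⟩
  have hgε := (hgpos _ hε).le
  have hP0 : π * (1 - r) * poissonKernelReal r 0 + π ≤ 3 * π := by
    rw [poissonKernelReal_zero hr1, mul_assoc, mul_div_cancel₀ _ (by linarith)]
    nlinarith [pi_pos]
  have hr : |r| < 1 := abs_lt.mpr ⟨by linarith, hr1⟩
  have hcont : Continuous fun t : AddCircle (2 * π) => poissonKernelReal r (dist t θ) := by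
    have := continuous_poissonKernelReal hr; fun_prop
  rw [neg_log_norm_singInnerAngle μ hr0 hr1, integral_eq_lintegral_of_nonneg_ae
    (Filter.Eventually.of_forall fun t => poissonKernelReal_nonneg hr _) hcont.aestronglyMeasurable]
  refine ENNReal.toReal_le_of_le_ofReal (by positivity) ?_
  calc _ ≤ _ := lintegral_poissonKernelReal_dist_le μ (fun t => AddCircle.dist_le_pi t θ) hganti
        (hball θ) hr0 hr1 hε hgε
    _ ≤ _ := ENNReal.ofReal_le_ofReal (mul_le_mul_of_nonneg_right hP0 hgε)

/-- If `μ([θ-t,θ+t]) ≤ t g(t)` with `g` positive continuous decreasing, then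
`-log |S(re^{iθ})| ≤ 3π g(π(1-r))`. -/
theorem stmt16 (μ : Measure (AddCircle (2 * Real.pi))) [IsFiniteMeasure μ]
    (g : ℝ → ℝ)
    (hgpos : ∀ t ∈ Set.Ioc (0 : ℝ) Real.pi, 0 < g t)
    (hgcont : ContinuousOn g (Set.Ioc (0 : ℝ) Real.pi))
    (hganti : AntitoneOn g (Set.Ioc (0 : ℝ) Real.pi))
    (hball : ∀ (θ : AddCircle (2 * Real.pi)), ∀ t ∈ Set.Ioc (0 : ℝ) Real.pi,
      μ (Metric.closedBall θ t) ≤ ENNReal.ofReal (t * g t)) :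
    ∀ r ∈ Set.Ico (0 : ℝ) 1, ∀ θ : ℝ,
      -Real.log (‖
          (singInnerAngle μ ((r : ℂ) * Complex.exp (θ * Complex.I)))‖) ≤
        3 * Real.pi * g (Real.pi * (1 - r)) :=
  stmt16_general μ g hgpos hganti hball
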